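/- arXiv:2208.11157 — 3 statements merged into one kernel-verified Lean document; each statement's English description precedes it below -/
import Mathlib

section
/- Let 0 < α < 1 and let P : [0,T] → ℝ be continuously differentiable with P(0) arbitrary. Define ψ(t;λ) = (sin(πα)/π) λ^{α-1} ∫₀^t e^{-(t-τ)λ} P'(τ) dτ for λ > 0. Then ∫₀^∞ ψ(t;λ) dλ = (1/Γ(1-α)) ∫₀^t (t-τ)^{-α} P'(τ) dτ, i.e., the integral of the auxiliary variable over λ equals the Caputo fractional derivative of P of order α. -/
open Real MeasureTheory intervalIntegral

lemma aux_integrableOn_rpow_exp {a r : ℝ} (ha : 0 < a) (hr : 0 < r) :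
    IntegrableOn (fun x : ℝ => x ^ (a - 1) * Real.exp (-(r * x))) (Set.Ioi 0) := by
  have h1 : IntegrableOn (fun x : ℝ => Real.exp (-x) * x ^ (a - 1)) (Set.Ioi 0) :=
    Real.GammaIntegral_convergent ha
  have h2 : IntegrableOn (fun x : ℝ => Real.exp (-(x * r)) * (x * r) ^ (a - 1)) (Set.Ioi 0) := by
    have := (integrableOn_Ioi_comp_mul_right_iff
        (fun x : ℝ => Real.exp (-x) * x ^ (a - 1)) 0 hr).mpr (by simpa using h1)
    simpa using this
  have h3 : IntegrableOn (fun x : ℝ => (r ^ (a - 1))⁻¹ * (Real.exp (-(x * r)) * (x * r) ^ (a - 1))) (Set.Ioi 0) := h2.const_mul (r ^ (a - 1))⁻¹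
  refine h3.congr_fun (fun x hx => ?_) measurableSet_Ioi
  have hx0 : (0 : ℝ) < x := hx
  have hrne : r ^ (a - 1) ≠ 0 := (Real.rpow_pos_of_pos hr _).ne'
  beta_reduce
  rw [Real.mul_rpow hx0.le hr.le, mul_comm x r]
  field_simp

theorem diffusive_rep_caputo (α T : ℝ) (h0 : 0 < α) (h1 : α < 1) (hT : 0 < T)
    (P : ℝ → ℝ) (hP : ContDiff ℝ 1 P)
    (ψ : ℝ → ℝ → ℝ)
    (hψ : ∀ t lam, ψ t lam =
      (Real.sin (π * α) / π) * lam ^ (α - 1) *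
        ∫ τ in (0:ℝ)..t, Real.exp (-((t - τ) * lam)) * deriv P τ)
    (t : ℝ) (htmem : t ∈ Set.Icc (0:ℝ) T) :
    (∫ lam in Set.Ioi (0:ℝ), ψ t lam) =
      (1 / Real.Gamma (1 - α)) * ∫ τ in (0:ℝ)..t, (t - τ) ^ (-α) * deriv P τ := by
  obtain ⟨ht0, htT⟩ := htmem
  rcases eq_or_lt_of_le ht0 with rfl | ht
  · simp [hψ]
  have hP' : Continuous (deriv P) := hP.continuous_deriv le_rfl
  set c : ℝ := Real.sin (π * α) / π with hc
  set F : ℝ → ℝ → ℝ :=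
    fun lam τ => lam ^ (α - 1) * (Real.exp (-((t - τ) * lam)) * deriv P τ) with hF
  -- rewrite ψ
  have hIoc : ∀ lam : ℝ, ψ t lam = c * ∫ τ in Set.Ioc 0 t, F lam τ := by
    intro lam
    rw [hψ, intervalIntegral.integral_of_le ht.le, mul_assoc,
      ← MeasureTheory.integral_const_mul]
  -- measurability on product
  have hmeas : AEStronglyMeasurable (Function.uncurry F)
      ((volume.restrict (Set.Ioi 0)).prod (volume.restrict (Set.Ioc 0 t))) := by
    have hm2 : Continuous fun p : ℝ × ℝ =>
        Real.exp (-((t - p.2) * p.1)) * deriv P p.2 :=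
      (((continuous_const.sub continuous_snd).mul continuous_fst).neg.rexp).mul
        (hP'.comp continuous_snd)
    have hm1 : ContinuousOn (fun p : ℝ × ℝ => p.1 ^ (α - 1))
        (Set.Ioi 0 ×ˢ Set.Ioc 0 t) := by
      intro p hp
      exact (ContinuousAt.comp
        (Real.continuousAt_rpow_const p.1 (α - 1) (Or.inl (ne_of_gt hp.1)))
        continuousAt_fst).continuousWithinAt
    rw [Measure.prod_restrict]
    exact ((hm1.mul hm2.continuousOn).aestronglyMeasurable
      (measurableSet_Ioi.prod measurableSet_Ioc))
  -- a.e. τ in Ioo 0 t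
  have haeIoo : ∀ᵐ τ ∂(volume.restrict (Set.Ioc 0 t)), τ ∈ Set.Ioo 0 t := by
    rw [← Measure.restrict_congr_set Ioo_ae_eq_Ioc]
    exact ae_restrict_mem measurableSet_Ioo
  -- slice integrability
  have hslice : ∀ τ ∈ Set.Ioo 0 t, IntegrableOn (fun lam => F lam τ) (Set.Ioi 0) := by
    intro τ hτ
    have h3 : IntegrableOn (fun lam : ℝ => lam ^ (α - 1) * Real.exp (-((t - τ) * lam)) * deriv P τ) (Set.Ioi 0) :=
      (aux_integrableOn_rpow_exp h0 (sub_pos.mpr hτ.2)).mul_const (deriv P τ)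
    refine h3.congr_fun (fun lam _ => by simp only [hF]; ring) measurableSet_Ioi
  -- value of inner integral
  have hval : ∀ τ ∈ Set.Ioo 0 t,
      (∫ lam in Set.Ioi 0, F lam τ)
        = ((1 / (t - τ)) ^ α * Real.Gamma α) * deriv P τ := by
    intro τ hτ
    have h1 : (∫ lam in Set.Ioi 0, F lam τ)
        = (∫ lam in Set.Ioi (0:ℝ), lam ^ (α - 1) * Real.exp (-((t - τ) * lam)))
            * deriv P τ := by
      rw [← MeasureTheory.integral_mul_const]
      exact setIntegral_congr_fun measurableSet_Ioi fun lam _ => by simp [hF]; ring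
    rw [h1, integral_rpow_mul_exp_neg_mul_Ioi h0 (sub_pos.mpr hτ.2)]
  -- value of norm integral
  have hnorm : ∀ τ ∈ Set.Ioo 0 t,
      (∫ lam in Set.Ioi 0, ‖F lam τ‖)
        = ((1 / (t - τ)) ^ α * Real.Gamma α) * |deriv P τ| := by
    intro τ hτ
    have h1 : (∫ lam in Set.Ioi 0, ‖F lam τ‖)
        = (∫ lam in Set.Ioi (0:ℝ), lam ^ (α - 1) * Real.exp (-((t - τ) * lam)))
            * |deriv P τ| := by
      rw [← MeasureTheory.integral_mul_const]
      refine setIntegral_congr_fun measurableSet_Ioi fun lam hlam => ?_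
      have hl : (0:ℝ) < lam := hlam
      simp only [hF, Real.norm_eq_abs, abs_mul,
        abs_of_nonneg (Real.rpow_nonneg hl.le (α - 1)),
        abs_of_pos (Real.exp_pos _)]
      ring
    rw [h1, integral_rpow_mul_exp_neg_mul_Ioi h0 (sub_pos.mpr hτ.2)]
  -- integrability of the dominating function
  have hrpowInt : IntegrableOn (fun τ => (t - τ) ^ (-α)) (Set.Icc 0 t) := by
    have h := (intervalIntegral.intervalIntegrable_rpow'
      (show (-1:ℝ) < -α by linarith) (a := 0) (b := t)).comp_sub_left t
    simp only [sub_zero, sub_self] at h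
    exact (intervalIntegrable_iff_integrableOn_Icc_of_le ht.le).mp h.symm
  have hgIcc : IntegrableOn
      (fun τ => (Real.Gamma α * |deriv P τ|) * (t - τ) ^ (-α)) (Set.Icc 0 t) :=
    hrpowInt.continuousOn_mul (continuous_const.mul hP'.abs).continuousOn isCompact_Icc
  have hg : IntegrableOn
      (fun τ => ((1 / (t - τ)) ^ α * Real.Gamma α) * |deriv P τ|) (Set.Ioc 0 t) := by
    refine (hgIcc.mono_set Set.Ioc_subset_Icc_self).congr_fun (fun τ hτ => ?_)
      measurableSet_Ioc
    have h1 : (0:ℝ) ≤ t - τ := sub_nonneg.mpr hτ.2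
    rw [one_div, Real.inv_rpow h1, ← Real.rpow_neg h1]
    ring
  -- Fubini integrability
  have hFint : Integrable (Function.uncurry F)
      ((volume.restrict (Set.Ioi 0)).prod (volume.restrict (Set.Ioc 0 t))) := by
    rw [integrable_prod_iff' hmeas]
    constructor
    · filter_upwards [haeIoo] with τ hτ
      exact hslice τ hτ
    · refine hg.congr ?_
      filter_upwards [haeIoo] with τ hτ
      exact (hnorm τ hτ).symm
  -- key constant identity
  have hπα : (0:ℝ) < π * α := mul_pos Real.pi_pos h0
  have hπα2 : π * α < π := by nlinarith [Real.pi_pos]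
  have hsin : Real.sin (π * α) ≠ 0 :=
    (Real.sin_pos_of_pos_of_lt_pi hπα hπα2).ne'
  have hΓ1 : Real.Gamma (1 - α) ≠ 0 := (Real.Gamma_pos_of_pos (by linarith)).ne'
  have h2 : Real.sin (π * α) * (Real.Gamma α * Real.Gamma (1 - α)) = π := by
    rw [Real.Gamma_mul_Gamma_one_sub]
    field_simp
  have hkey : c * Real.Gamma α = 1 / Real.Gamma (1 - α) := by
    rw [hc, div_mul_eq_mul_div, div_eq_div_iff Real.pi_ne_zero hΓ1, one_mul]
    calc Real.sin (π * α) * Real.Gamma α * Real.Gamma (1 - α)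
        = Real.sin (π * α) * (Real.Gamma α * Real.Gamma (1 - α)) := by ring
      _ = π := h2
  -- main computation
  calc (∫ lam in Set.Ioi (0:ℝ), ψ t lam)
      = ∫ lam in Set.Ioi (0:ℝ), c * ∫ τ in Set.Ioc 0 t, F lam τ :=
        setIntegral_congr_fun measurableSet_Ioi fun lam _ => hIoc lam
    _ = c * ∫ lam in Set.Ioi (0:ℝ), ∫ τ in Set.Ioc 0 t, F lam τ :=
        MeasureTheory.integral_const_mul _ _
    _ = c * ∫ τ in Set.Ioc 0 t, ∫ lam in Set.Ioi (0:ℝ), F lam τ := by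
        rw [MeasureTheory.integral_integral_swap hFint]
    _ = c * ∫ τ in Set.Ioc 0 t, ((1 / (t - τ)) ^ α * Real.Gamma α) * deriv P τ := by
        congr 1
        refine MeasureTheory.integral_congr_ae ?_
        filter_upwards [haeIoo] with τ hτ
        exact hval τ hτ
    _ = c * ∫ τ in Set.Ioc 0 t, Real.Gamma α * ((t - τ) ^ (-α) * deriv P τ) := by
        congr 1
        refine setIntegral_congr_fun measurableSet_Ioc fun τ hτ => ?_
        have h1 : (0:ℝ) ≤ t - τ := sub_nonneg.mpr hτ.2
        rw [one_div, Real.inv_rpow h1, ← Real.rpow_neg h1]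
        ring
    _ = (c * Real.Gamma α) * ∫ τ in Set.Ioc 0 t, (t - τ) ^ (-α) * deriv P τ := by
        rw [MeasureTheory.integral_const_mul]; ring
    _ = (1 / Real.Gamma (1 - α)) * ∫ τ in (0:ℝ)..t, (t - τ) ^ (-α) * deriv P τ := by
        rw [hkey, intervalIntegral.integral_of_le ht.le]
end

section
/- Consider the ODE system (spatially homogeneous, zero sources): μ₀ H' = 0, ε₀ε_∞ E' = −P', τ₀^α Σ_{ℓ=1}^L ζ_ℓ ψ_ℓ + P = ε₀(ε_s−ε_∞) E, ψ_ℓ' + λ_ℓ ψ_ℓ = (sin(πα)/π) λ_ℓ^{α−1} P', with ζ_ℓ > 0, λ_ℓ > 0, and initial data ψ_ℓ(0)=0, P(0)=0. Define the total energy E^♯(t) = ½[ε₀ε_∞ E² + μ₀ H² + P²/(ε₀(ε_s−ε_∞))] + (π τ₀^α / (2 sin(πα)(ε₀(ε_s−ε_∞)))) Σ_ℓ ζ_ℓ λ_ℓ^{1−α} ψ_ℓ². Then E^♯ is nonincreasing in t, with d/dt E^♯(t) = −(π τ₀^α / (sin(πα) ε₀(ε_s−ε_∞))) Σ_ℓ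 ζ_ℓ λ_ℓ^{2−α} ψ_ℓ² ≤ 0. -/
open Real


private lemma alg_aux (a c s τ q e e' h h' p p' S Q m : ℝ)
    (hc : c ≠ 0) (hs : s ≠ 0) (hq : q ≠ 0)
    (h1 : m * h' = 0) (h2 : a * e' = -p') (h3 : τ * S + p = c * e) :
    (1/2) * (a*(2*e*e') + m*(2*h*h') + (2*p*p')/c) + q*τ/(2*s*c)*((2*s/q)*p'*S - 2*Q)
      = -(q*τ/(s*c))*Q := by
  field_simp
  linear_combination (c*s*e) * h2 + (c*s*h) * h1 + (p'*s) * h3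

theorem approx_system_energy_decay
    (α μ₀ ε₀ τ₀ εs εi T : ℝ) (h0 : 0 < α) (h1 : α < 1)
    (hμ₀ : 0 < μ₀) (hε₀ : 0 < ε₀) (hτ₀ : 0 < τ₀) (hεs : εi < εs) (hεi : 0 < εi) (hT : 0 < T)
    (L : ℕ) (ζ lam : Fin L → ℝ) (hζ : ∀ ℓ, 0 < ζ ℓ) (hlam : ∀ ℓ, 0 < lam ℓ)
    (E H P : ℝ → ℝ) (ψ : Fin L → ℝ → ℝ)
    (hE : ContDiff ℝ 1 E) (hH : ContDiff ℝ 1 H) (hP : ContDiff ℝ 1 P)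
    (hψC : ∀ ℓ, ContDiff ℝ 1 (ψ ℓ))
    (hψ0 : ∀ ℓ, ψ ℓ 0 = 0) (hP0 : P 0 = 0)
    (heqH : ∀ t, μ₀ * deriv H t = 0)
    (heqE : ∀ t, ε₀ * εi * deriv E t = -deriv P t)
    (heqP : ∀ t, τ₀ ^ α * (∑ ℓ, ζ ℓ * ψ ℓ t) + P t = ε₀ * (εs - εi) * E t)
    (hode : ∀ ℓ t, deriv (ψ ℓ) t + lam ℓ * ψ ℓ t =
      (Real.sin (π * α) / π) * lam ℓ ^ (α - 1) * deriv P t)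
    (En : ℝ → ℝ)
    (hEn : ∀ t, En t =
      (1 / 2) * (ε₀ * εi * (E t) ^ 2 + μ₀ * (H t) ^ 2 + (P t) ^ 2 / (ε₀ * (εs - εi)))
        + (π * τ₀ ^ α / (2 * Real.sin (π * α) * (ε₀ * (εs - εi)))) *
            ∑ ℓ, ζ ℓ * lam ℓ ^ (1 - α) * (ψ ℓ t) ^ 2) :
    (AntitoneOn En (Set.Icc 0 T)) ∧
      ∀ t ∈ Set.Icc (0:ℝ) T,
        deriv En t =
          -(π * τ₀ ^ α / (Real.sin (π * α) * (ε₀ * (εs - εi)))) *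
              ∑ ℓ, ζ ℓ * lam ℓ ^ (2 - α) * (ψ ℓ t) ^ 2 ∧
        deriv En t ≤ 0 := by
  have hEnF : En = fun t =>
      (1 / 2) * (ε₀ * εi * (E t) ^ 2 + μ₀ * (H t) ^ 2 + (P t) ^ 2 / (ε₀ * (εs - εi)))
        + (π * τ₀ ^ α / (2 * Real.sin (π * α) * (ε₀ * (εs - εi)))) *
            ∑ ℓ, ζ ℓ * lam ℓ ^ (1 - α) * (ψ ℓ t) ^ 2 := funext hEn
  subst hEnF
  -- square derivative helper
  have hsq : ∀ (f : ℝ → ℝ), ContDiff ℝ 1 f → ∀ t : ℝ,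
      HasDerivAt (fun t => f t ^ 2) (2 * f t * deriv f t) t := by
    intro f hf t
    have hd := ((hf.differentiable one_ne_zero) t).hasDerivAt
    have : HasDerivAt (fun t => f t ^ 2) ((2:ℕ) * f t ^ (2 - 1) * deriv f t) t := hd.fun_pow 2
    convert this using 1
    push_cast
    ring
  have key : ∀ t : ℝ, HasDerivAt
      (fun t =>
        (1 / 2) * (ε₀ * εi * (E t) ^ 2 + μ₀ * (H t) ^ 2 + (P t) ^ 2 / (ε₀ * (εs - εi)))
          + (π * τ₀ ^ α / (2 * Real.sin (π * α) * (ε₀ * (εs - εi)))) *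
              ∑ ℓ, ζ ℓ * lam ℓ ^ (1 - α) * (ψ ℓ t) ^ 2)
      (-(π * τ₀ ^ α / (Real.sin (π * α) * (ε₀ * (εs - εi)))) *
              ∑ ℓ, ζ ℓ * lam ℓ ^ (2 - α) * (ψ ℓ t) ^ 2) t := by
    intro t
    have hraw : HasDerivAt
        (fun t =>
          (1 / 2) * (ε₀ * εi * (E t) ^ 2 + μ₀ * (H t) ^ 2 + (P t) ^ 2 / (ε₀ * (εs - εi)))
            + (π * τ₀ ^ α / (2 * Real.sin (π * α) * (ε₀ * (εs - εi)))) *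
                ∑ ℓ, ζ ℓ * lam ℓ ^ (1 - α) * (ψ ℓ t) ^ 2)
        ((1 / 2) * (ε₀ * εi * (2 * E t * deriv E t) + μ₀ * (2 * H t * deriv H t)
            + (2 * P t * deriv P t) / (ε₀ * (εs - εi)))
          + (π * τ₀ ^ α / (2 * Real.sin (π * α) * (ε₀ * (εs - εi)))) *
              ∑ ℓ, ζ ℓ * lam ℓ ^ (1 - α) * (2 * ψ ℓ t * deriv (ψ ℓ) t)) t := by
      apply HasDerivAt.add
      · exact (((((hsq E hE t).const_mul (ε₀ * εi)).add
          ((hsq H hH t).const_mul μ₀)).add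
          ((hsq P hP t).div_const (ε₀ * (εs - εi)))).const_mul (1 / 2))
      · exact (HasDerivAt.fun_sum (fun ℓ _ =>
          ((hsq (ψ ℓ) (hψC ℓ) t).const_mul (ζ ℓ * lam ℓ ^ (1 - α))).congr_deriv
            (by ring))).const_mul _
    have hsum : ∑ ℓ, ζ ℓ * lam ℓ ^ (1 - α) * (2 * ψ ℓ t * deriv (ψ ℓ) t)
        = (2 * Real.sin (π * α) / π) * deriv P t * (∑ ℓ, ζ ℓ * ψ ℓ t)
          - 2 * ∑ ℓ, ζ ℓ * lam ℓ ^ (2 - α) * (ψ ℓ t) ^ 2 := by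
      rw [Finset.mul_sum, Finset.mul_sum, ← Finset.sum_sub_distrib]
      refine Finset.sum_congr rfl fun ℓ _ => ?_
      have hψ' : deriv (ψ ℓ) t =
          (Real.sin (π * α) / π) * lam ℓ ^ (α - 1) * deriv P t - lam ℓ * ψ ℓ t := by
        linarith [hode ℓ t]
      have r1 : lam ℓ ^ (1 - α) * lam ℓ ^ (α - 1) = 1 := by
        rw [← Real.rpow_add (hlam ℓ)]
        norm_num
      have r2 : lam ℓ ^ (1 - α) * lam ℓ = lam ℓ ^ (2 - α) := by
        nth_rewrite 2 [← Real.rpow_one (lam ℓ)]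
        rw [← Real.rpow_add (hlam ℓ)]
        ring_nf
      rw [hψ']
      linear_combination (2 * ζ ℓ * ψ ℓ t * (Real.sin (π * α) / π) * deriv P t) * r1
        - (2 * ζ ℓ * (ψ ℓ t) ^ 2) * r2
    have heq : (1 / 2) * (ε₀ * εi * (2 * E t * deriv E t) + μ₀ * (2 * H t * deriv H t)
            + (2 * P t * deriv P t) / (ε₀ * (εs - εi)))
          + (π * τ₀ ^ α / (2 * Real.sin (π * α) * (ε₀ * (εs - εi)))) *
              ∑ ℓ, ζ ℓ * lam ℓ ^ (1 - α) * (2 * ψ ℓ t * deriv (ψ ℓ) t)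
        = -(π * τ₀ ^ α / (Real.sin (π * α) * (ε₀ * (εs - εi)))) *
              ∑ ℓ, ζ ℓ * lam ℓ ^ (2 - α) * (ψ ℓ t) ^ 2 := by
      rw [hsum]
      have hspos : 0 < Real.sin (π * α) := by
        apply Real.sin_pos_of_pos_of_lt_pi
        · positivity
        · nlinarith [Real.pi_pos]
      have hc : ε₀ * (εs - εi) ≠ 0 := by
        have h2 : (0:ℝ) < εs - εi := by linarith
        positivity
      exact alg_aux (ε₀ * εi) (ε₀ * (εs - εi)) (Real.sin (π * α)) (τ₀ ^ α) π
        (E t) (deriv E t) (H t) (deriv H t) (P t) (deriv P t)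
        (∑ ℓ, ζ ℓ * ψ ℓ t) (∑ ℓ, ζ ℓ * lam ℓ ^ (2 - α) * (ψ ℓ t) ^ 2) μ₀
        hc hspos.ne' Real.pi_ne_zero (heqH t) (heqE t) (heqP t)
    exact heq ▸ hraw
  have hQ : ∀ t : ℝ, 0 ≤ ∑ ℓ, ζ ℓ * lam ℓ ^ (2 - α) * (ψ ℓ t) ^ 2 := by
    intro t
    refine Finset.sum_nonneg fun ℓ _ => ?_
    exact mul_nonneg (mul_nonneg (hζ ℓ).le (Real.rpow_nonneg (hlam ℓ).le _)) (sq_nonneg _)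
  have hKpos : 0 < π * τ₀ ^ α / (Real.sin (π * α) * (ε₀ * (εs - εi))) := by
    have hs : 0 < Real.sin (π * α) := by
      apply Real.sin_pos_of_pos_of_lt_pi
      · positivity
      · nlinarith [Real.pi_pos]
    have ht1 : 0 < τ₀ ^ α := Real.rpow_pos_of_pos hτ₀ α
    have ht2 : (0:ℝ) < εs - εi := by linarith
    exact div_pos (mul_pos Real.pi_pos ht1) (mul_pos hs (mul_pos hε₀ ht2))
  have hderiv : ∀ t : ℝ, deriv (fun t =>
      (1 / 2) * (ε₀ * εi * (E t) ^ 2 + μ₀ * (H t) ^ 2 + (P t) ^ 2 / (ε₀ * (εs - εi)))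
        + (π * τ₀ ^ α / (2 * Real.sin (π * α) * (ε₀ * (εs - εi)))) *
            ∑ ℓ, ζ ℓ * lam ℓ ^ (1 - α) * (ψ ℓ t) ^ 2) t
      = -(π * τ₀ ^ α / (Real.sin (π * α) * (ε₀ * (εs - εi)))) *
            ∑ ℓ, ζ ℓ * lam ℓ ^ (2 - α) * (ψ ℓ t) ^ 2 := fun t => (key t).deriv
  have hnonpos : ∀ t : ℝ, deriv (fun t =>
      (1 / 2) * (ε₀ * εi * (E t) ^ 2 + μ₀ * (H t) ^ 2 + (P t) ^ 2 / (ε₀ * (εs - εi)))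
        + (π * τ₀ ^ α / (2 * Real.sin (π * α) * (ε₀ * (εs - εi)))) *
            ∑ ℓ, ζ ℓ * lam ℓ ^ (1 - α) * (ψ ℓ t) ^ 2) t ≤ 0 := by
    intro t
    rw [hderiv t]
    exact mul_nonpos_of_nonpos_of_nonneg (neg_nonpos.mpr hKpos.le) (hQ t)
  refine ⟨?_, fun t _ => ⟨hderiv t, hnonpos t⟩⟩
  have hdiff : Differentiable ℝ (fun t =>
      (1 / 2) * (ε₀ * εi * (E t) ^ 2 + μ₀ * (H t) ^ 2 + (P t) ^ 2 / (ε₀ * (εs - εi)))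
        + (π * τ₀ ^ α / (2 * Real.sin (π * α) * (ε₀ * (εs - εi)))) *
            ∑ ℓ, ζ ℓ * lam ℓ ^ (1 - α) * (ψ ℓ t) ^ 2) := fun t => (key t).differentiableAt
  exact antitoneOn_of_deriv_nonpos (convex_Icc 0 T) hdiff.continuous.continuousOn
    (hdiff.differentiableOn) (fun x _ => hnonpos x)
end

section
/- For α ∈ (0,1) and s ∈ ℂ with Re(s) > 0, the identity s^α = (sin(πα)/π) · s · ∫₀^∞ λ^{α-1}/(s + λ) dλ holds, where s^α denotes the principal branch. -/
open Real MeasureTheory Complex Set Filter Topology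

lemma aux_int {α : ℝ} (h0 : 0 < α) {c : ℝ} (hc : 0 < c) {n : ℕ} (hn : α < n) :
    IntegrableOn (fun l : ℝ => l ^ (α - 1) / (c + l) ^ n) (Ioi 0) := by
  have hmeas : ∀ t : Set ℝ, AEStronglyMeasurable (fun l : ℝ => l ^ (α - 1) / (c + l) ^ n)
      (volume.restrict t) := fun t => by
    apply Measurable.aestronglyMeasurable
    exact (measurable_id.pow_const (α-1)).div ((measurable_const.add measurable_id).pow_const n)
  have h01 : IntegrableOn (fun l : ℝ => l ^ (α - 1) / (c + l) ^ n) (Ioc 0 1) := by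
    have hbase : IntegrableOn (fun l : ℝ => l ^ (α - 1) / c ^ n) (Ioc 0 1) := by
      apply Integrable.div_const
      exact (intervalIntegrable_iff_integrableOn_Ioc_of_le zero_le_one).1
        (intervalIntegral.intervalIntegrable_rpow' (by linarith))
    refine hbase.mono' (hmeas _) ?_
    filter_upwards [ae_restrict_mem measurableSet_Ioc] with l hl
    have hl0 : 0 < l := hl.1
    rw [Real.norm_eq_abs, _root_.abs_of_nonneg (by positivity : (0:ℝ) ≤ _)]
    apply div_le_div_of_nonneg_left (by positivity) (by positivity)
    exact pow_le_pow_left₀ hc.le (by linarith) n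
  have h1i : IntegrableOn (fun l : ℝ => l ^ (α - 1) / (c + l) ^ n) (Ioi 1) := by
    have hbase : IntegrableOn (fun l : ℝ => l ^ (α - 1 - n)) (Ioi 1) :=
      integrableOn_Ioi_rpow_of_lt (by push_cast; linarith) one_pos
    refine hbase.mono' (hmeas _) ?_
    filter_upwards [ae_restrict_mem measurableSet_Ioi] with l hl
    have hl1 : (1:ℝ) < l := hl
    have hl0 : 0 < l := by linarith
    rw [Real.norm_eq_abs, _root_.abs_of_nonneg (by positivity : (0:ℝ) ≤ _)]
    have hrhs : l ^ (α - 1 - (n:ℝ)) = l ^ (α - 1) / l ^ n := by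
      rw [Real.rpow_sub hl0, Real.rpow_natCast]
    rw [hrhs]
    apply div_le_div_of_nonneg_left (by positivity) (by positivity)
    exact pow_le_pow_left₀ hl0.le (by linarith) n
  have : Ioi (0:ℝ) = Ioc 0 1 ∪ Ioi 1 := (Ioc_union_Ioi_eq_Ioi zero_le_one).symm
  rw [this]
  exact h01.union h1i

lemma key_real {α : ℝ} (h0 : 0 < α) (h1 : α < 1) {x : ℝ} (hx : 0 < x) :
    ∫ l in Ioi (0:ℝ), l ^ (α - 1) / (x + l) = π / Real.sin (π * α) * x ^ (α - 1) := by
  set f : ℝ → ℝ → ℝ := fun l t => l ^ (α - 1) * Real.exp (-((x + l) * t)) with hf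
  -- inner integral in t
  have step1 : ∀ l : ℝ, 0 < l → ∫ t in Ioi (0:ℝ), f l t = l ^ (α - 1) / (x + l) := by
    intro l hl
    have hr : 0 < x + l := by linarith
    have base : ∫ t in Ioi (0:ℝ), t ^ ((1:ℝ) - 1) * Real.exp (-((x + l) * t))
        = (1 / (x + l)) ^ (1:ℝ) * Real.Gamma 1 :=
      Real.integral_rpow_mul_exp_neg_mul_Ioi one_pos hr
    simp only [sub_self, Real.rpow_zero, one_mul, Real.rpow_one, Real.Gamma_one, mul_one] at base
    rw [hf]
    rw [MeasureTheory.integral_const_mul, base]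
    ring
  -- inner integral in l
  have step2 : ∀ t : ℝ, 0 < t → ∫ l in Ioi (0:ℝ), f l t
      = Real.Gamma α * t ^ (-α) * Real.exp (-(x * t)) := by
    intro t ht
    have hcongr : ∀ l ∈ Ioi (0:ℝ), f l t
        = (l ^ (α - 1) * Real.exp (-(t * l))) * Real.exp (-(x * t)) := by
      intro l hl
      simp only [f]
      rw [show -((x+l)*t) = -(t*l) + -(x*t) by ring, Real.exp_add, mul_assoc]
    rw [setIntegral_congr_fun measurableSet_Ioi hcongr, MeasureTheory.integral_mul_const,
      Real.integral_rpow_mul_exp_neg_mul_Ioi h0 ht]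
    rw [one_div, Real.inv_rpow ht.le, ← Real.rpow_neg ht.le]
    ring
  -- integrability on the product
  have hprodmeas : AEStronglyMeasurable (Function.uncurry f)
      ((volume.restrict (Ioi (0:ℝ))).prod (volume.restrict (Ioi (0:ℝ)))) := by
    apply Measurable.aestronglyMeasurable
    exact ((measurable_fst.pow_const (α-1)).mul
      (((measurable_const.add measurable_fst).mul measurable_snd).neg.exp))
  have hnonneg : ∀ l t : ℝ, 0 ≤ l → 0 ≤ f l t := by
    intro l t hl
    exact mul_nonneg (Real.rpow_nonneg hl _) (Real.exp_pos _).le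
  have hint : Integrable (Function.uncurry f)
      ((volume.restrict (Ioi (0:ℝ))).prod (volume.restrict (Ioi (0:ℝ)))) := by
    rw [MeasureTheory.integrable_prod_iff hprodmeas]
    constructor
    · filter_upwards [ae_restrict_mem measurableSet_Ioi] with l hl
      have hr : 0 < x + l := by linarith [mem_Ioi.mp hl]
      have : IntegrableOn (fun t => Real.exp (-(x + l) * t)) (Ioi (0:ℝ)) :=
        exp_neg_integrableOn_Ioi 0 hr
      have h2 : IntegrableOn (fun t => l ^ (α - 1) * Real.exp (-(x + l) * t)) (Ioi (0:ℝ)) :=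
        this.const_mul _
      refine h2.congr_fun (fun t ht => ?_) measurableSet_Ioi
      simp only [Function.uncurry_apply_pair, f, neg_mul]
    · have heq : (fun l => l ^ (α - 1) / (x + l) ^ 1)
          =ᵐ[volume.restrict (Ioi (0:ℝ))] fun l => ∫ t in Ioi (0:ℝ), ‖Function.uncurry f (l, t)‖ := by
        filter_upwards [ae_restrict_mem measurableSet_Ioi] with l hl
        have hl0 := mem_Ioi.mp hl
        rw [pow_one, ← step1 l hl0]
        refine integral_congr_ae ?_
        filter_upwards [ae_restrict_mem measurableSet_Ioi] with t ht
        rw [Real.norm_eq_abs, _root_.abs_of_nonneg (show (0:ℝ) ≤ Function.uncurry f (l, t) from hnonneg l t hl0.le)]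
        rfl
      exact (aux_int h0 hx (n := 1) (by exact_mod_cast h1)).congr heq
  -- swap
  have swap := MeasureTheory.integral_integral_swap hint
  calc ∫ l in Ioi (0:ℝ), l ^ (α - 1) / (x + l)
      = ∫ l in Ioi (0:ℝ), ∫ t in Ioi (0:ℝ), f l t := by
        refine setIntegral_congr_fun measurableSet_Ioi (fun l hl => ?_)
        exact (step1 l (mem_Ioi.mp hl)).symm
    _ = ∫ t in Ioi (0:ℝ), ∫ l in Ioi (0:ℝ), f l t := swap
    _ = ∫ t in Ioi (0:ℝ), Real.Gamma α * (t ^ ((1 - α) - 1) * Real.exp (-(x * t))) := by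
        refine setIntegral_congr_fun measurableSet_Ioi (fun t ht => ?_)
        rw [step2 t (mem_Ioi.mp ht)]
        rw [show (1 - α) - 1 = -α by ring]
        ring
    _ = Real.Gamma α * ((1 / x) ^ (1 - α) * Real.Gamma (1 - α)) := by
        rw [MeasureTheory.integral_const_mul,
          Real.integral_rpow_mul_exp_neg_mul_Ioi (by linarith) hx]
    _ = π / Real.sin (π * α) * x ^ (α - 1) := by
        rw [one_div, Real.inv_rpow hx.le, ← Real.rpow_neg hx.le,
          show -(1 - α) = α - 1 by ring]
        rw [← Real.Gamma_mul_Gamma_one_sub α]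
        ring

noncomputable def gfun (α : ℝ) (z : ℂ) : ℂ :=
  ∫ l in Ioi (0:ℝ), ((l ^ (α - 1) : ℝ) : ℂ) / (z + (l : ℝ))

lemma norm_bound {α : ℝ} {z : ℂ} {l : ℝ} (hl : 0 < l) {c : ℝ} (hc : 0 < c)
    (hre : c ≤ z.re) {n : ℕ} :
    ‖((l ^ (α - 1) : ℝ) : ℂ) / (z + (l : ℝ)) ^ n‖ ≤ l ^ (α - 1) / (c + l) ^ n := by
  have h1 : c + l ≤ ‖z + (l:ℝ)‖ := by
    calc c + l ≤ (z + (l:ℝ)).re := by simp [Complex.add_re]; linarith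
    _ ≤ ‖z + (l:ℝ)‖ := Complex.re_le_norm _
  rw [norm_div, norm_pow, Complex.norm_real, Real.norm_eq_abs,
    _root_.abs_of_nonneg (Real.rpow_nonneg hl.le _)]
  apply div_le_div_of_nonneg_left (Real.rpow_nonneg hl.le _) (by positivity)
  exact pow_le_pow_left₀ (by positivity) h1 n

lemma g_integrand_int {α : ℝ} (h0 : 0 < α) (h1 : α < 1) {z : ℂ} (hz : 0 < z.re) :
    IntegrableOn (fun l : ℝ => ((l ^ (α - 1) : ℝ) : ℂ) / (z + (l : ℝ))) (Ioi 0) := by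
  have hmeas : AEStronglyMeasurable (fun l : ℝ => ((l ^ (α - 1) : ℝ) : ℂ) / (z + (l : ℝ)))
      (volume.restrict (Ioi (0:ℝ))) := by
    apply Measurable.aestronglyMeasurable
    exact (Complex.measurable_ofReal.comp (measurable_id.pow_const (α-1))).div
      (measurable_const.add Complex.measurable_ofReal)
  refine (aux_int h0 hz (n := 1) (by exact_mod_cast h1)).mono' hmeas ?_
  filter_upwards [ae_restrict_mem measurableSet_Ioi] with l hl
  have := norm_bound (α := α) (mem_Ioi.mp hl) hz le_rfl (n := 1)
  simpa using this

lemma g_diff {α : ℝ} (h0 : 0 < α) (h1 : α < 1) {z : ℂ} (hz : 0 < z.re) :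
    DifferentiableAt ℂ (gfun α) z := by
  set ε := z.re / 2 with hε
  have hε0 : 0 < ε := by positivity
  have key := hasDerivAt_integral_of_dominated_loc_of_deriv_le
    (F := fun (w : ℂ) (l : ℝ) => ((l ^ (α - 1) : ℝ) : ℂ) / (w + (l : ℝ)))
    (F' := fun (w : ℂ) (l : ℝ) => -(((l ^ (α - 1) : ℝ) : ℂ) / (w + (l : ℝ)) ^ 2))
    (x₀ := z) (bound := fun l => l ^ (α - 1) / (ε + l) ^ 2)
    (μ := volume.restrict (Ioi (0:ℝ))) (Metric.ball_mem_nhds z hε0) ?_ ?_ ?_ ?_ ?_ ?_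
  · exact key.2.differentiableAt
  · filter_upwards with w
    apply Measurable.aestronglyMeasurable
    exact (Complex.measurable_ofReal.comp (measurable_id.pow_const (α-1))).div
      (measurable_const.add Complex.measurable_ofReal)
  · exact g_integrand_int h0 h1 hz
  · apply Measurable.aestronglyMeasurable
    exact ((Complex.measurable_ofReal.comp (measurable_id.pow_const (α-1))).div
      ((measurable_const.add Complex.measurable_ofReal).pow_const 2)).neg
  · filter_upwards [ae_restrict_mem measurableSet_Ioi] with l hl w hw
    have hwre : ε ≤ w.re := by
      have : |w.re - z.re| ≤ ‖w - z‖ := by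
        simpa using Complex.abs_re_le_norm (w - z)
      have h2 : ‖w - z‖ < ε := by simpa [Metric.mem_ball, dist_eq_norm] using hw
      have := abs_le.mp this
      have := this.1
      simp only [hε] at *
      linarith
    rw [norm_neg]
    exact norm_bound (mem_Ioi.mp hl) hε0 hwre
  · have : (2:ℝ) ≤ ((2:ℕ):ℝ) := by norm_num
    exact aux_int h0 hε0 (n := 2) (by norm_num; linarith)
  · filter_upwards [ae_restrict_mem measurableSet_Ioi] with l hl w hw
    have hl0 := mem_Ioi.mp hl
    have hwre : 0 < w.re := by
      have : |w.re - z.re| ≤ ‖w - z‖ := by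
        simpa using Complex.abs_re_le_norm (w - z)
      have h2 : ‖w - z‖ < ε := by simpa [Metric.mem_ball, dist_eq_norm] using hw
      have := (abs_le.mp this).1
      simp only [hε] at *
      linarith
    have hne : w + (l:ℝ) ≠ 0 := by
      intro h
      have : (w + (l:ℝ)).re = 0 := by rw [h]; simp
      simp only [Complex.add_re, Complex.ofReal_re] at this
      linarith
    have hd : HasDerivAt (fun w : ℂ => w + (l:ℝ)) 1 w := by
      simpa using (hasDerivAt_id w).add_const ((l:ℝ):ℂ)
    have hder : HasDerivAt (fun w : ℂ => ((l ^ (α - 1) : ℝ) : ℂ) * (w + (l:ℝ))⁻¹)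
        (((l ^ (α - 1) : ℝ) : ℂ) * (-1 / (w + (l:ℝ)) ^ 2)) w :=
      (hd.inv hne).const_mul (((l ^ (α - 1) : ℝ) : ℂ))
    have h2 : (fun w : ℂ => ((l ^ (α - 1) : ℝ) : ℂ) * (w + (l:ℝ))⁻¹)
        = fun w : ℂ => ((l ^ (α - 1) : ℝ) : ℂ) / (w + (l:ℝ)) := by
      funext w; rw [div_eq_mul_inv]
    rw [h2] at hder
    exact hder.congr_deriv (by ring)

lemma eq_real {α : ℝ} (h0 : 0 < α) (h1 : α < 1) {x : ℝ} (hx : 0 < x) :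
    ((x:ℂ)) ^ (α : ℂ) = ((Real.sin (π * α) / π : ℝ) : ℂ) * (x:ℂ) * gfun α x := by
  have hsin : Real.sin (π * α) ≠ 0 := by
    refine ne_of_gt (Real.sin_pos_of_pos_of_lt_pi (by positivity) ?_)
    nlinarith [Real.pi_pos]
  have hg : gfun α x = ((∫ l in Ioi (0:ℝ), l ^ (α - 1) / (x + l) : ℝ) : ℂ) := by
    have hcong : ∀ l ∈ Ioi (0:ℝ),
        ((l ^ (α - 1) : ℝ) : ℂ) / ((x:ℂ) + (l:ℝ)) = ((l ^ (α - 1) / (x + l) : ℝ) : ℂ) := by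
      intro l hl
      push_cast
      ring
    rw [gfun, setIntegral_congr_fun measurableSet_Ioi hcong]
    exact integral_ofReal
  rw [hg, key_real h0 h1 hx, ← Complex.ofReal_cpow hx.le,
    ← Complex.ofReal_mul, ← Complex.ofReal_mul, Complex.ofReal_inj]
  have h2 : Real.sin (π * α) * π / (π * Real.sin (π * α)) = 1 := by
    rw [mul_comm π (Real.sin (π * α))]
    exact div_self (mul_ne_zero hsin Real.pi_ne_zero)
  have h3 : x * x ^ (α - 1) = x ^ α := by
    nth_rewrite 1 [← Real.rpow_one x]
    rw [← Real.rpow_add hx]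
    norm_num
  calc x ^ α = x * x ^ (α - 1) * 1 := by rw [mul_one, h3]
    _ = Real.sin (π * α) / π * x * (π / Real.sin (π * α) * x ^ (α - 1)) := by
        rw [← h2]; ring

theorem cpow_diffusive_integral (α : ℝ) (h0 : 0 < α) (h1 : α < 1)
    (s : ℂ) (hs : 0 < s.re) :
    s ^ (α : ℂ) = (Real.sin (π * α) / π : ℝ) * s *
      ∫ lam in Set.Ioi (0:ℝ), ((lam ^ (α - 1) : ℝ) : ℂ) / (s + (lam : ℝ)) := by
  set U : Set ℂ := {z : ℂ | 0 < z.re} with hU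
  have hopen : IsOpen U := isOpen_lt continuous_const Complex.continuous_re
  have hconn : IsPreconnected U := (convex_halfSpace_re_gt 0).isPreconnected
  set F : ℂ → ℂ := fun z => z ^ (α : ℂ) with hF
  set G : ℂ → ℂ := fun z => ((Real.sin (π * α) / π : ℝ) : ℂ) * z * gfun α z with hG
  have hFan : AnalyticOnNhd ℂ F U := by
    refine DifferentiableOn.analyticOnNhd (fun z hz => DifferentiableAt.differentiableWithinAt ?_) hopen
    exact DifferentiableAt.cpow differentiableAt_id (differentiableAt_const _) (Or.inl hz)
  have hGan : AnalyticOnNhd ℂ G U := by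
    refine DifferentiableOn.analyticOnNhd (fun z hz => DifferentiableAt.differentiableWithinAt ?_) hopen
    exact ((differentiableAt_const _).mul differentiableAt_id).mul (g_diff h0 h1 hz)
  have h1U : (1:ℂ) ∈ U := by simp [hU]
  set u : ℕ → ℂ := fun n => ((1 + 1/(n+1) : ℝ) : ℂ) with hu
  have htend : Tendsto u atTop (𝓝[≠] (1:ℂ)) := by
    apply tendsto_nhdsWithin_of_tendsto_nhds_of_eventually_within
    · have hr : Tendsto (fun n : ℕ => (1 + 1/(n+1) : ℝ)) atTop (𝓝 1) := by
        have := tendsto_one_div_add_atTop_nhds_zero_nat (𝕜 := ℝ)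
        simpa using tendsto_const_nhds.add this
      have h6 : Tendsto u atTop (𝓝 ((1:ℝ):ℂ)) := (Complex.continuous_ofReal.tendsto 1).comp hr
      simpa using h6
    · filter_upwards with n
      simp only [hu, mem_compl_iff, mem_singleton_iff]
      intro h
      have : (1 + 1/(n+1) : ℝ) = 1 := by exact_mod_cast h
      have hpos : (0:ℝ) < 1/(n+1) := by positivity
      linarith
  have hfreq : ∃ᶠ z in 𝓝[≠] (1:ℂ), F z = G z := by
    refine htend.frequently (Frequently.of_forall fun n => ?_)
    exact eq_real h0 h1 (by positivity)
  have heq : EqOn F G U :=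
    hFan.eqOn_of_preconnected_of_frequently_eq hGan hconn h1U hfreq
  have := heq hs
  simpa [hF, hG, gfun] using this
end
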